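/- arXiv:1708.01321 — 3 statements merged into one kernel-verified Lean document; each statement's English description precedes it below -/
import Mathlib

section
/- Every finite bicolored point set S = R ∪ B in the plane in general position with |R| ≥ 2 and |B| ≥ 2 contains at least one balanced 4-hole. -/
/-!
Find two triangles `p q a` and `p q b` on opposite sides of a segment `p q`, both meeting
`R ∪ B` only in their vertices, with `a, p, b, q` two red and two blue points. The quadrilateral
`a p b q` is then a balanced 4-hole: its boundary lies in the union of the two closed triangles,
which is star-shaped about the midpoint of `p q`, so every other point of `R ∪ B` lies in an
unbounded component of the complement of the boundary.

Such triangles exist by induction on `|R| + |B|`. For `|R| = |B| = 2`, one of the three lines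
joining a fixed point to another one separates the remaining two points. Otherwise a colour class
with at least three points contains an extreme point of the convex hull of `R ∪ B`; deleting it
is harmless, because an extreme point lies in no triangle spanned by the other points.
-/

noncomputable section

/-- A set of points in the plane (modeled as `ℂ`) is in general position if
no three of its (distinct) points are collinear. -/
def GenPos (S : Set ℂ) : Prop :=
  ∀ p ∈ S, ∀ q ∈ S, ∀ r ∈ S, p ≠ q → p ≠ r → q ≠ r → ¬ Collinear ℝ ({p, q, r} : Set ℂ)

/-- The boundary of a quadrilateral with vertices `a, b, c, d` in cyclic order. -/
def QuadBdry (a b c d : ℂ) : Set ℂ :=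
  segment ℝ a b ∪ segment ℝ b c ∪ segment ℝ c d ∪ segment ℝ d a

/-- The quadrilateral with vertices `a, b, c, d` in cyclic order is simple:
vertices are pairwise distinct, consecutive edges meet exactly at their common
vertex, and opposite edges are disjoint. -/
def IsSimpleQuad (a b c d : ℂ) : Prop :=
  List.Pairwise (· ≠ ·) [a, b, c, d] ∧
  segment ℝ a b ∩ segment ℝ b c = {b} ∧
  segment ℝ b c ∩ segment ℝ c d = {c} ∧
  segment ℝ c d ∩ segment ℝ d a = {d} ∧
  segment ℝ d a ∩ segment ℝ a b = {a} ∧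
  segment ℝ a b ∩ segment ℝ c d = ∅ ∧
  segment ℝ b c ∩ segment ℝ d a = ∅

/-- The interior of a simple quadrilateral: the union of the bounded connected
components of the complement of its boundary. -/
def QuadInterior (a b c d : ℂ) : Set ℂ :=
  {x | x ∉ QuadBdry a b c d ∧
    Bornology.IsBounded (connectedComponentIn (QuadBdry a b c d)ᶜ x)}

/-- The (not necessarily convex) quadrilateral with vertices `a, b, c, d`
in cyclic order is a balanced 4-hole of the bicolored set `R ∪ B`:
it is simple, its vertices belong to `R ∪ B` with exactly two of them red and
two blue, and its open interior contains no point of `R ∪ B`. -/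
def IsBalanced4Hole (R B : Finset ℂ) (a b c d : ℂ) : Prop :=
  IsSimpleQuad a b c d ∧
  ({a, b, c, d} : Set ℂ) ⊆ (↑R ∪ ↑B : Set ℂ) ∧
  (({a, b, c, d} : Set ℂ) ∩ ↑R).ncard = 2 ∧
  (({a, b, c, d} : Set ℂ) ∩ ↑B).ncard = 2 ∧
  ∀ x ∈ (↑R ∪ ↑B : Set ℂ), x ∉ QuadInterior a b c d

/-- The set of boundaries of balanced 4-holes of `R ∪ B`; two balanced 4-holes
are distinct iff they have distinct boundaries (so this set counts them). -/
def balanced4HoleBdries (R B : Finset ℂ) : Set (Set ℂ) :=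
  {Q | ∃ a b c d : ℂ, IsBalanced4Hole R B a b c d ∧ Q = QuadBdry a b c d}

/-- `p q` is an edge of the convex hull of `S`: both endpoints belong to `S`
and some nonzero linear functional is maximized on `S` exactly along it. -/
def IsHullEdge (S : Set ℂ) (p q : ℂ) : Prop :=
  p ∈ S ∧ q ∈ S ∧ p ≠ q ∧
  ∃ f : ℂ →ₗ[ℝ] ℝ, f ≠ 0 ∧ f p = f q ∧ ∀ s ∈ S, f s ≤ f p

/-- The counter-clockwise angle (in `(0, 2π]`) from the ray `p → q` to the ray
`p → x`. -/
def ccwAngle (p q x : ℂ) : ℝ :=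
  if Complex.arg ((x - p) / (q - p)) ≤ 0 then
    Complex.arg ((x - p) / (q - p)) + 2 * Real.pi
  else Complex.arg ((x - p) / (q - p))

/-- `t` is the first point of `S` reached when rotating the ray `p → q`
counter-clockwise around `p`. -/
def IsFirstCCW (S : Set ℂ) (p q t : ℂ) : Prop :=
  t ∈ S ∧ t ≠ p ∧ t ≠ q ∧
  ∀ s ∈ S, s ≠ p → s ≠ q → s ≠ t → ccwAngle p q t < ccwAngle p q s

/-- `t` is the first point of `S` reached when rotating the ray `p → q`
clockwise around `p`. -/
def IsFirstCW (S : Set ℂ) (p q t : ℂ) : Prop :=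
  t ∈ S ∧ t ≠ p ∧ t ≠ q ∧
  ∀ s ∈ S, s ≠ p → s ≠ q → s ≠ t → ccwAngle p q s < ccwAngle p q t

/-- `t ∈ T(p,q)`: `t` is one of the (at most four) first points of `S = R ∪ B`
reached by the four rotations of the rays `p → q` around `p` and `q → p`
around `q`, clockwise and counter-clockwise. -/
def InT (R B : Finset ℂ) (p q t : ℂ) : Prop :=
  IsFirstCCW (↑R ∪ ↑B : Set ℂ) p q t ∨ IsFirstCW (↑R ∪ ↑B : Set ℂ) p q t ∨
  IsFirstCCW (↑R ∪ ↑B : Set ℂ) q p t ∨ IsFirstCW (↑R ∪ ↑B : Set ℂ) q p t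

/-- The bichromatic segment `p q` (`p` red, `q` blue) is green: it is an edge
or a diagonal of some balanced 4-hole, i.e. both `p` and `q` are vertices of
some balanced 4-hole. -/
def IsGreenEdge (R B : Finset ℂ) (p q : ℂ) : Prop :=
  p ∈ R ∧ q ∈ B ∧
  ∃ a b c d : ℂ, IsBalanced4Hole R B a b c d ∧
    p ∈ ({a, b, c, d} : Set ℂ) ∧ q ∈ ({a, b, c, d} : Set ℂ)

/-- The bichromatic segment `p q` is black: it is not green and is an edge of
the convex hull of `R ∪ B`. -/
def IsBlackEdge (R B : Finset ℂ) (p q : ℂ) : Prop :=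
  p ∈ R ∧ q ∈ B ∧ ¬ IsGreenEdge R B p q ∧ IsHullEdge (↑R ∪ ↑B : Set ℂ) p q

/-- The bichromatic segment `p q` is red: it is neither green nor black and all
points of `T(p,q)` are red. -/
def IsRedEdge (R B : Finset ℂ) (p q : ℂ) : Prop :=
  p ∈ R ∧ q ∈ B ∧ ¬ IsGreenEdge R B p q ∧ ¬ IsHullEdge (↑R ∪ ↑B : Set ℂ) p q ∧
  ∀ t : ℂ, InT R B p q t → t ∈ R

/-- The bichromatic segment `p q` is blue: it is neither green nor black and
all points of `T(p,q)` are blue. -/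
def IsBlueEdge (R B : Finset ℂ) (p q : ℂ) : Prop :=
  p ∈ R ∧ q ∈ B ∧ ¬ IsGreenEdge R B p q ∧ ¬ IsHullEdge (↑R ∪ ↑B : Set ℂ) p q ∧
  ∀ t : ℂ, InT R B p q t → t ∈ B

/-- `R` and `B` are linearly separable: some line has all of `R` strictly on
one side and all of `B` strictly on the other side. -/
def LinSep (R B : Finset ℂ) : Prop :=
  ∃ (f : ℂ →ₗ[ℝ] ℝ) (c : ℝ), (∀ x ∈ R, f x < c) ∧ (∀ x ∈ B, c < f x)

/-- A finite point set is in (strictly) convex position. -/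
def ConvexPos (P : Set ℂ) : Prop :=
  ∀ x ∈ P, x ∉ convexHull ℝ (P \ {x})

/-- `{a, b, c, d}` is the vertex set of a balanced convex 4-hole of `R ∪ B`:
four pairwise distinct points in convex position, all in `R ∪ B`, exactly two
red and two blue, whose open interior (the interior of their convex hull)
contains no point of `R ∪ B`. -/
def IsBalancedConvex4Hole (R B : Finset ℂ) (a b c d : ℂ) : Prop :=
  List.Pairwise (· ≠ ·) [a, b, c, d] ∧
  ConvexPos ({a, b, c, d} : Set ℂ) ∧
  ({a, b, c, d} : Set ℂ) ⊆ (↑R ∪ ↑B : Set ℂ) ∧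
  (({a, b, c, d} : Set ℂ) ∩ ↑R).ncard = 2 ∧
  (({a, b, c, d} : Set ℂ) ∩ ↑B).ncard = 2 ∧
  ∀ x ∈ (↑R ∪ ↑B : Set ℂ), x ∉ interior (convexHull ℝ ({a, b, c, d} : Set ℂ))

/-- The open wedge `W(a,b,c)`: the open convex region bounded by the rays
`a → b` and `a → c`. -/
def wedge (a b c : ℂ) : Set ℂ :=
  {x | ∃ s t : ℝ, 0 < s ∧ 0 < t ∧ x = a + s • (b - a) + t • (c - a)}

/-- The open triangle `Δ a b c`. -/
def openTriangle (a b c : ℂ) : Set ℂ :=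
  interior (convexHull ℝ ({a, b, c} : Set ℂ))

/-- The edge `u v` of `CH(R)` and the edge `w z` of `CH(B)` see each other:
the union of their vertex sets is the vertex set of a balanced convex 4-hole
whose interior intersects neither `CH(R)` nor `CH(B)`. -/
def SeeEachOther (R B : Finset ℂ) (u v w z : ℂ) : Prop :=
  IsHullEdge (↑R : Set ℂ) u v ∧ IsHullEdge (↑B : Set ℂ) w z ∧
  IsBalancedConvex4Hole R B u v w z ∧
  interior (convexHull ℝ ({u, v, w, z} : Set ℂ)) ∩ convexHull ℝ (↑R : Set ℂ) = ∅ ∧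
  interior (convexHull ℝ ({u, v, w, z} : Set ℂ)) ∩ convexHull ℝ (↑B : Set ℂ) = ∅

/-- Condition C1: some edge of `CH(R)` and some edge of `CH(B)` see each
other. -/
def CondC1 (R B : Finset ℂ) : Prop :=
  ∃ u v w z : ℂ, SeeEachOther R B u v w z

/-- Condition C2: there exist an edge `u v` of `CH(R)` and points `b, z ∈ B`
with `z` in the open triangle `Δ u v b`, no red point in `Δ u v b`, and some
red point in the wedge `W(b,u,v)`; or the same with `R` and `B` swapped. -/
def CondC2 (R B : Finset ℂ) : Prop :=
  (∃ u v : ℂ, IsHullEdge (↑R : Set ℂ) u v ∧ ∃ b ∈ B, ∃ z ∈ B,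
      z ∈ openTriangle u v b ∧ (∀ x ∈ R, x ∉ openTriangle u v b) ∧
      ∃ x ∈ R, (x : ℂ) ∈ wedge b u v) ∨
  (∃ u v : ℂ, IsHullEdge (↑B : Set ℂ) u v ∧ ∃ r ∈ R, ∃ z ∈ R,
      z ∈ openTriangle u v r ∧ (∀ x ∈ B, x ∉ openTriangle u v r) ∧
      ∃ x ∈ B, (x : ℂ) ∈ wedge r u v)

/-- The boundary of the closed polygon with vertices `v 0, …, v (m-1)` in
cyclic order. -/
def PolyBdry (m : ℕ) (v : ℕ → ℂ) : Set ℂ :=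
  ⋃ i ∈ Finset.range m, segment ℝ (v i) (v ((i + 1) % m))

/-- The polygon with vertices `v 0, …, v (m-1)` in cyclic order is simple:
the vertices are distinct, consecutive edges meet exactly at their common
vertex, and non-consecutive edges are disjoint. -/
def IsSimplePoly (m : ℕ) (v : ℕ → ℂ) : Prop :=
  Set.InjOn v {i | i < m} ∧
  ∀ i < m, ∀ j < m, i ≠ j →
    (j = (i + 1) % m →
      segment ℝ (v i) (v ((i + 1) % m)) ∩ segment ℝ (v j) (v ((j + 1) % m)) = {v j}) ∧
    (j ≠ (i + 1) % m → i ≠ (j + 1) % m →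
      segment ℝ (v i) (v ((i + 1) % m)) ∩ segment ℝ (v j) (v ((j + 1) % m)) = ∅)

/-- The interior of a simple polygon: the union of the bounded connected
components of the complement of its boundary. -/
def PolyInterior (m : ℕ) (v : ℕ → ℂ) : Set ℂ :=
  {x | x ∉ PolyBdry m v ∧
    Bornology.IsBounded (connectedComponentIn (PolyBdry m v)ᶜ x)}

/-- Twice the signed area of the triangle `p q x`: positive iff `x` lies to the left of the
directed line `p → q`. -/
def orient (p q x : ℂ) : ℝ := (q - p).re * (x - p).im - (q - p).im * (x - p).re

lemma orient_self_left (p q : ℂ) : orient p q p = 0 := by simp [orient]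

lemma orient_self_right (p q : ℂ) : orient p q q = 0 := by simp [orient]; ring

lemma orient_swap (p q x : ℂ) : orient p x q = -orient p q x := by simp only [orient]; ring

lemma orient_smul_add_smul (p q x y : ℂ) {s t : ℝ} (hst : s + t = 1) :
    orient p q (s • x + t • y) = s * orient p q x + t * orient p q y := by
  obtain rfl : s = 1 - t := by linarith
  simp only [orient, Complex.sub_re, Complex.sub_im, Complex.add_re, Complex.add_im,
    Complex.real_smul, Complex.mul_re, Complex.mul_im, Complex.ofReal_re, Complex.ofReal_im]
  ring

lemma collinear_of_orient_eq_zero {p q x : ℂ} (hpq : p ≠ q) (h : orient p q x = 0) :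
    Collinear ℝ ({p, q, x} : Set ℂ) := by
  set z := (x - p) / (q - p)
  have hqp : q - p ≠ 0 := sub_ne_zero.mpr hpq.symm
  have hz : z.im = 0 := by
    simp only [z, Complex.div_im, orient] at h ⊢
    rw [div_sub_div_same, div_eq_zero_iff]
    left; linarith
  have hx : x = z.re • (q - p) + p := by
    have : (z.re : ℂ) = z := Complex.ext (by simp) (by simp [hz])
    rw [Complex.real_smul, this, div_mul_cancel₀ _ hqp, sub_add_cancel]
  rw [collinear_iff_of_mem (Set.mem_insert p _)]
  refine ⟨q - p, ?_⟩
  rintro y (rfl | rfl | rfl)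
  · exact ⟨0, by simp⟩
  · exact ⟨1, by simp⟩
  · exact ⟨z.re, by rw [vadd_eq_add, ← hx]⟩

lemma GenPos.mono {S T : Set ℂ} (hgp : GenPos S) (hTS : T ⊆ S) : GenPos T :=
  fun p hp q hq r hr => hgp p (hTS hp) q (hTS hq) r (hTS hr)

lemma GenPos.orient_ne_zero {S : Set ℂ} (hgp : GenPos S) {p q x : ℂ} (hp : p ∈ S)
    (hq : q ∈ S) (hx : x ∈ S) (hpq : p ≠ q) (hpx : p ≠ x) (hqx : q ≠ x) : orient p q x ≠ 0 :=
  fun h => hgp p hp q hq x hx hpq hpx hqx (collinear_of_orient_eq_zero hpq h)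

lemma orient_mul_nonneg_of_mem_convexHull {p q a y : ℂ}
    (hy : y ∈ convexHull ℝ ({p, q, a} : Set ℂ)) : 0 ≤ orient p q y * orient p q a := by
  suffices convexHull ℝ ({p, q, a} : Set ℂ) ⊆ {y | 0 ≤ orient p q y * orient p q a} from this hy
  refine convexHull_min ?_ ?_
  · rintro z (rfl | rfl | rfl)
    · simp [orient_self_left]
    · simp [orient_self_right]
    · exact mul_self_nonneg (orient p q z)
  · intro y₁ hy₁ y₂ hy₂ s t hs ht hst
    simp only [Set.mem_ofPred_eq, orient_smul_add_smul p q y₁ y₂ hst] at hy₁ hy₂ ⊢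
    nlinarith

lemma segment_inter_segment_eq_singleton_of_orient_ne_zero {u v w : ℂ} (h : orient u v w ≠ 0) :
    segment ℝ u v ∩ segment ℝ u w = {u} := by
  refine Set.eq_singleton_iff_unique_mem.mpr
    ⟨⟨left_mem_segment ℝ u v, left_mem_segment ℝ u w⟩, ?_⟩
  rintro y ⟨hyv, hyw⟩
  rw [segment_eq_image] at hyv hyw
  obtain ⟨s, -, rfl⟩ := hyv
  obtain ⟨t, -, hts⟩ := hyw
  have hv := congrArg (orient u v) hts
  rw [orient_smul_add_smul _ _ _ _ (sub_add_cancel 1 t),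
    orient_smul_add_smul _ _ _ _ (sub_add_cancel 1 s), orient_self_left, orient_self_right] at hv
  obtain rfl : t = 0 := by simpa [h] using hv
  simpa using hts.symm

lemma segment_inter_segment_eq_empty_of_orient_mul_neg {p q a b : ℂ}
    (h : orient p q a * orient p q b < 0) : segment ℝ p a ∩ segment ℝ q b = ∅ := by
  refine Set.eq_empty_iff_forall_notMem.mpr ?_
  rintro y ⟨hya, hyb⟩
  rw [segment_eq_image] at hya hyb
  obtain ⟨s, ⟨hs0, -⟩, rfl⟩ := hya
  obtain ⟨t, ⟨ht0, -⟩, hts⟩ := hyb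
  have ho := congrArg (orient p q) hts
  rw [orient_smul_add_smul _ _ _ _ (sub_add_cancel 1 t),
    orient_smul_add_smul _ _ _ _ (sub_add_cancel 1 s), orient_self_left, orient_self_right] at ho
  have hs : s * orient p q a = 0 := by nlinarith [mul_nonneg hs0 ht0]
  have ht : t * orient p q b = 0 := by linarith
  have ha : orient p q a ≠ 0 := by rintro h0; simp [h0] at h
  have hb : orient p q b ≠ 0 := by rintro h0; simp [h0] at h
  obtain rfl : s = 0 := by simpa [ha] using hs
  obtain rfl : t = 0 := by simpa [hb] using ht
  have hpq : p = q := by simpa using hts.symm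
  simp [hpq, orient] at h

lemma pairwise_ne_of_orient_mul_neg {p q a b : ℂ} (h : orient p q a * orient p q b < 0) :
    List.Pairwise (· ≠ ·) [a, p, b, q] := by
  have hpq : p ≠ q := by rintro rfl; simp [orient] at h
  have hab : a ≠ b := by rintro rfl; nlinarith [mul_self_nonneg (orient p q a)]
  simp only [List.pairwise_cons, List.mem_cons, List.not_mem_nil, or_false, forall_eq_or_imp,
    forall_eq, List.Pairwise.nil, false_implies, implies_true, and_true]
  refine ⟨⟨?_, hab, ?_⟩, ⟨?_, hpq⟩, ?_⟩ <;> rintro rfl <;>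
    simp [orient_self_left, orient_self_right] at h

lemma isSimpleQuad_of_orient_mul_neg {p q a b : ℂ} (hgp : GenPos {a, p, b, q})
    (h : orient p q a * orient p q b < 0) : IsSimpleQuad a p b q := by
  have hne := pairwise_ne_of_orient_mul_neg h
  simp only [List.pairwise_cons, List.mem_cons, List.not_mem_nil, or_false, forall_eq_or_imp,
    forall_eq, List.Pairwise.nil, false_implies, implies_true, and_true] at hne
  obtain ⟨⟨hap, hab, haq⟩, ⟨hpb, hpq⟩, hbq⟩ := hne
  have hcorner : ∀ u ∈ ({a, p, b, q} : Set ℂ), ∀ v ∈ ({a, p, b, q} : Set ℂ),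
      ∀ w ∈ ({a, p, b, q} : Set ℂ), u ≠ v → u ≠ w → v ≠ w →
      segment ℝ v u ∩ segment ℝ u w = {u} := fun u hu v hv w hw huv huw hvw => by
    rw [segment_symm]
    exact segment_inter_segment_eq_singleton_of_orient_ne_zero
      (hgp.orient_ne_zero hu hv hw huv huw hvw)
  refine ⟨pairwise_ne_of_orient_mul_neg h,
    hcorner p (by simp) a (by simp) b (by simp) hap.symm hpb hab,
    hcorner b (by simp) p (by simp) q (by simp) hpb.symm hbq hpq,
    hcorner q (by simp) b (by simp) a (by simp) hbq.symm haq.symm hab.symm,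
    hcorner a (by simp) q (by simp) p (by simp) haq hap hpq.symm, ?_,
    segment_inter_segment_eq_empty_of_orient_mul_neg (by linarith)⟩
  rw [segment_symm, segment_symm ℝ b]
  exact segment_inter_segment_eq_empty_of_orient_mul_neg h

/-- The ray from `m` through `x ∉ K`, beyond `x`, stays outside `K`. -/
lemma not_isBounded_connectedComponentIn_compl {K : Set ℂ} {m x : ℂ} (hK : StarConvex ℝ m K)
    (hm : m ∈ K) (hx : x ∉ K) : ¬ Bornology.IsBounded (connectedComponentIn Kᶜ x) := by
  have hxm : 0 < ‖x - m‖ := norm_pos_iff.mpr (sub_ne_zero.mpr (by rintro rfl; exact hx hm))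
  set ray : ℝ → ℂ := fun t => x + t • (x - m)
  have hray : ray '' Set.Ici 0 ⊆ Kᶜ := by
    rintro _ ⟨t, (ht : 0 ≤ t), rfl⟩ hK'
    have ht1 : 1 + t ≠ 0 := by positivity
    refine hx ?_
    convert hK hK' (a := t / (1 + t)) (b := 1 / (1 + t)) (by positivity) (by positivity)
      (by field_simp; ring) using 1
    match_scalars <;> field_simp
    ring
  have hsub : ray '' Set.Ici 0 ⊆ connectedComponentIn Kᶜ x :=
    (isPreconnected_Ici.image _ (by fun_prop)).subset_connectedComponentIn
      ⟨0, Set.self_mem_Ici, by simp [ray]⟩ hray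
  rintro hb
  obtain ⟨r, hr⟩ := (Metric.isBounded_iff_subset_closedBall x).mp (hb.subset hsub)
  have hfar := hr ⟨(|r| + 1) / ‖x - m‖, Set.mem_Ici.mpr (by positivity), rfl⟩
  rw [Metric.mem_closedBall, dist_eq_norm, add_sub_cancel_left, norm_smul, Real.norm_eq_abs,
    abs_of_nonneg (by positivity), div_mul_cancel₀ _ hxm.ne'] at hfar
  linarith [le_abs_self r]

def IsEmptyTriangle (S : Set ℂ) (p q a : ℂ) : Prop :=
  S ∩ convexHull ℝ {p, q, a} ⊆ {p, q, a}

structure IsBalancedTrianglePair (R B : Finset ℂ) (p q a b : ℂ) : Prop where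
  subset : ({a, p, b, q} : Set ℂ) ⊆ ↑R ∪ ↑B
  opposite : orient p q a * orient p q b < 0
  isEmptyTriangle_a : IsEmptyTriangle (↑R ∪ ↑B) p q a
  isEmptyTriangle_b : IsEmptyTriangle (↑R ∪ ↑B) p q b
  ncard_red : (({a, p, b, q} : Set ℂ) ∩ ↑R).ncard = 2
  ncard_blue : (({a, p, b, q} : Set ℂ) ∩ ↑B).ncard = 2

lemma quadBdry_subset_union_convexHull (p q a b : ℂ) :
    QuadBdry a p b q ⊆ convexHull ℝ {p, q, a} ∪ convexHull ℝ {p, q, b} := by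
  rintro x (((hx | hx) | hx) | hx)
  · exact Or.inl (segment_subset_convexHull (by simp) (by simp) hx)
  · exact Or.inr (segment_subset_convexHull (by simp) (by simp) hx)
  · exact Or.inr (segment_subset_convexHull (by simp) (by simp) hx)
  · exact Or.inl (segment_subset_convexHull (by simp) (by simp) hx)

lemma vertices_subset_quadBdry (a b c d : ℂ) : ({a, b, c, d} : Set ℂ) ⊆ QuadBdry a b c d := by
  rintro v (rfl | rfl | rfl | rfl)
  · exact Or.inl (Or.inl (Or.inl (left_mem_segment ℝ _ _)))
  · exact Or.inl (Or.inl (Or.inr (left_mem_segment ℝ _ _)))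
  · exact Or.inl (Or.inr (left_mem_segment ℝ _ _))
  · exact Or.inr (left_mem_segment ℝ _ _)

lemma IsBalancedTrianglePair.isBalanced4Hole {R B : Finset ℂ} {p q a b : ℂ}
    (hgp : GenPos (↑R ∪ ↑B : Set ℂ)) (h : IsBalancedTrianglePair R B p q a b) :
    IsBalanced4Hole R B a p b q := by
  refine ⟨isSimpleQuad_of_orient_mul_neg (hgp.mono h.subset) h.opposite, h.subset,
    h.ncard_red, h.ncard_blue, fun x hx hint => ?_⟩
  set K := convexHull ℝ ({p, q, a} : Set ℂ) ∪ convexHull ℝ {p, q, b}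
  have hm : midpoint ℝ p q ∈ convexHull ℝ ({p, q, a} : Set ℂ) ∩ convexHull ℝ {p, q, b} :=
    ⟨segment_subset_convexHull (by simp) (by simp) (midpoint_mem_segment p q),
      segment_subset_convexHull (by simp) (by simp) (midpoint_mem_segment p q)⟩
  have hK : StarConvex ℝ (midpoint ℝ p q) K :=
    ((convex_convexHull ℝ _).starConvex hm.1).union ((convex_convexHull ℝ _).starConvex hm.2)
  have hxV : x ∉ ({a, p, b, q} : Set ℂ) := fun hxV => hint.1 (vertices_subset_quadBdry _ _ _ _ hxV)
  have hxK : x ∉ K := by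
    rintro (hxa | hxb)
    · rcases h.isEmptyTriangle_a ⟨hx, hxa⟩ with rfl | rfl | rfl <;> simp at hxV
    · rcases h.isEmptyTriangle_b ⟨hx, hxb⟩ with rfl | rfl | rfl <;> simp at hxV
  exact not_isBounded_connectedComponentIn_compl hK (Or.inl hm.1) hxK
    (hint.2.subset (connectedComponentIn_mono x
      (Set.compl_subset_compl.mpr (quadBdry_subset_union_convexHull p q a b))))

lemma IsEmptyTriangle.of_subset_insert {S T : Set ℂ} {p q a x : ℂ} (h : IsEmptyTriangle T p q a)
    (hT : {p, q, a} ⊆ T) (hx : x ∉ convexHull ℝ T) (hS : S ⊆ insert x T) :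
    IsEmptyTriangle S p q a := by
  rintro y ⟨hyS, hy⟩
  rcases hS hyS with rfl | hyT
  · exact absurd (convexHull_mono hT hy) hx
  · exact h ⟨hyT, hy⟩

lemma IsBalancedTrianglePair.of_subset_insert {R B R' B' : Finset ℂ} {p q a b x : ℂ}
    (h : IsBalancedTrianglePair R' B' p q a b) (hR' : R' ⊆ R) (hB' : B' ⊆ B)
    (hR : (↑R : Set ℂ) ⊆ insert x ↑R') (hB : (↑B : Set ℂ) ⊆ insert x ↑B')
    (hx : x ∉ convexHull ℝ (↑R' ∪ ↑B' : Set ℂ)) : IsBalancedTrianglePair R B p q a b := by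
  have hxV : x ∉ ({a, p, b, q} : Set ℂ) := fun hxV => hx (subset_convexHull ℝ _ (h.subset hxV))
  have hS : (↑R ∪ ↑B : Set ℂ) ⊆ insert x (↑R' ∪ ↑B') := Set.union_subset
    (hR.trans (Set.insert_subset_insert Set.subset_union_left))
    (hB.trans (Set.insert_subset_insert Set.subset_union_right))
  have hV : ∀ C C' : Finset ℂ, C' ⊆ C → (↑C : Set ℂ) ⊆ insert x ↑C' →
      ({a, p, b, q} : Set ℂ) ∩ ↑C = ({a, p, b, q} : Set ℂ) ∩ ↑C' := by
    refine fun C C' hC' hC => Set.Subset.antisymm (fun y ⟨hyV, hyC⟩ => ⟨hyV, ?_⟩)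
      (Set.inter_subset_inter_right _ (Finset.coe_subset.mpr hC'))
    rcases hC hyC with rfl | hy
    exacts [absurd hyV hxV, hy]
  exact {
    subset := h.subset.trans (Set.union_subset_union (Finset.coe_subset.mpr hR')
      (Finset.coe_subset.mpr hB'))
    opposite := h.opposite
    isEmptyTriangle_a := h.isEmptyTriangle_a.of_subset_insert
      (fun y hy => h.subset (by aesop)) hx hS
    isEmptyTriangle_b := h.isEmptyTriangle_b.of_subset_insert
      (fun y hy => h.subset (by aesop)) hx hS
    ncard_red := by rw [hV R R' hR' hR]; exact h.ncard_red
    ncard_blue := by rw [hV B B' hB' hB]; exact h.ncard_blue }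

lemma isEmptyTriangle_of_orient_mul_neg {p q a b : ℂ} (h : orient p q a * orient p q b < 0) :
    IsEmptyTriangle {a, p, b, q} p q a := by
  rintro y ⟨hyV, hy⟩
  rcases hyV with rfl | rfl | rfl | rfl
  · simp
  · simp
  · nlinarith [orient_mul_nonneg_of_mem_convexHull hy]
  · simp

lemma IsBalancedTrianglePair.of_eq_union {R B : Finset ℂ} {p q a b : ℂ}
    (hS : ({a, p, b, q} : Set ℂ) = ↑R ∪ ↑B) (hR : R.card = 2) (hB : B.card = 2)
    (h : orient p q a * orient p q b < 0) : IsBalancedTrianglePair R B p q a b where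
  subset := hS.le
  opposite := h
  isEmptyTriangle_a := hS ▸ isEmptyTriangle_of_orient_mul_neg h
  isEmptyTriangle_b := by
    rw [← hS, Set.insert_comm a, Set.insert_comm a b, Set.insert_comm p]
    exact isEmptyTriangle_of_orient_mul_neg (by linarith)
  ncard_red := by rw [hS, Set.union_inter_cancel_left, Set.ncard_coe_finset, hR]
  ncard_blue := by rw [hS, Set.union_inter_cancel_right, Set.ncard_coe_finset, hB]

lemma orient_mul_neg_of_ne_zero {w x y z : ℂ} (hxy : orient w x y ≠ 0)
    (hxz : orient w x z ≠ 0) (hyz : orient w y z ≠ 0) :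
    orient w x y * orient w x z < 0 ∨ orient w y x * orient w y z < 0 ∨
      orient w z x * orient w z y < 0 := by
  rw [orient_swap w x y, orient_swap w x z, orient_swap w y z]
  have hsq : 0 < (orient w x y * orient w x z * orient w y z) ^ 2 :=
    sq_pos_of_ne_zero (mul_ne_zero (mul_ne_zero hxy hxz) hyz)
  by_contra! h
  -- the three products multiply to `-(orient w x y * orient w x z * orient w y z) ^ 2`
  nlinarith [mul_nonneg (mul_nonneg h.1 h.2.1) h.2.2]

lemma exists_isBalancedTrianglePair_of_card_eq_two {R B : Finset ℂ} (hd : Disjoint R B)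
    (hgp : GenPos (↑R ∪ ↑B : Set ℂ)) (hR : R.card = 2) (hB : B.card = 2) :
    ∃ p q a b, IsBalancedTrianglePair R B p q a b := by
  obtain ⟨r₁, r₂, hr, rfl⟩ := Finset.card_eq_two.mp hR
  obtain ⟨b₁, b₂, hb, rfl⟩ := Finset.card_eq_two.mp hB
  simp only [Finset.disjoint_insert_left, Finset.disjoint_singleton_left, Finset.mem_insert,
    Finset.mem_singleton, not_or] at hd
  obtain ⟨⟨h₁₁, h₁₂⟩, h₂₁, h₂₂⟩ := hd
  have hS : (↑({r₁, r₂} : Finset ℂ) ∪ ↑({b₁, b₂} : Finset ℂ) : Set ℂ) = {r₁, r₂, b₁, b₂} := by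
    push_cast; rw [Set.insert_union, Set.singleton_union]
  rw [hS] at hgp
  rcases orient_mul_neg_of_ne_zero (hgp.orient_ne_zero (by simp) (by simp) (by simp) hr h₁₁ h₂₁)
    (hgp.orient_ne_zero (by simp) (by simp) (by simp) hr h₁₂ h₂₂)
    (hgp.orient_ne_zero (by simp) (by simp) (by simp) h₁₁ h₁₂ hb) with h | h | h
  · exact ⟨r₁, r₂, b₁, b₂, .of_eq_union (by rw [hS]; aesop) hR hB h⟩
  · exact ⟨r₁, b₁, r₂, b₂, .of_eq_union (by rw [hS]; aesop) hR hB h⟩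
  · exact ⟨r₁, b₂, r₂, b₁, .of_eq_union (by rw [hS]; aesop) hR hB h⟩

lemma Set.Finite.subset_convexHull_extremePoints {E : Type*} [NormedAddCommGroup E]
    [NormedSpace ℝ E] {s : Set E} (hs : s.Finite) :
    s ⊆ convexHull ℝ ((convexHull ℝ s).extremePoints ℝ) := by
  have hcl := closure_convexHull_extremePoints (hs.isCompact_convexHull (𝕜 := ℝ))
    (convex_convexHull ℝ s)
  rw [((hs.subset extremePoints_convexHull_subset).isCompact_convexHull (𝕜 := ℝ)).isClosed
    |>.closure_eq] at hcl
  rw [hcl]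
  exact subset_convexHull ℝ s

lemma notMem_convexHull_of_mem_extremePoints {E : Type*} [AddCommGroup E] [Module ℝ E]
    {s t : Set E} {x : E} (hx : x ∈ (convexHull ℝ s).extremePoints ℝ) (hts : t ⊆ s)
    (hxt : x ∉ t) : x ∉ convexHull ℝ t := by
  rw [(convex_convexHull ℝ s).mem_extremePoints_iff_mem_sdiff_convexHull_sdiff] at hx
  refine fun hxt' => hx.2 (convexHull_mono ?_ hxt')
  exact fun y hy => ⟨subset_convexHull ℝ s (hts hy), fun hyx => hxt (hyx ▸ hy)⟩

/-- If every extreme point were blue with only two blue points, all of `R ∪ B` would lie on the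
line through them. -/
lemma exists_extremePoint_of_three_le_card {R B : Finset ℂ} (hgp : GenPos (↑R ∪ ↑B : Set ℂ))
    (hR : 3 ≤ R.card) (hB : 2 ≤ B.card) :
    ∃ x ∈ (convexHull ℝ (↑R ∪ ↑B : Set ℂ)).extremePoints ℝ,
      (x ∈ R ∧ 3 ≤ R.card) ∨ (x ∈ B ∧ 3 ≤ B.card) := by
  set E := (convexHull ℝ (↑R ∪ ↑B : Set ℂ)).extremePoints ℝ
  have hS : (↑R ∪ ↑B : Set ℂ) ⊆ convexHull ℝ E :=
    (R.finite_toSet.union B.finite_toSet).subset_convexHull_extremePoints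
  by_cases hred : ∃ x ∈ E, x ∈ R
  · obtain ⟨x, hx, hxR⟩ := hred
    exact ⟨x, hx, Or.inl ⟨hxR, hR⟩⟩
  push Not at hred
  have hEB : E ⊆ ↑B := fun x hx => (extremePoints_convexHull_subset hx).resolve_left (hred x hx)
  obtain ⟨r₁, hr₁, r₂, hr₂, r₃, hr₃, h₁₂, h₁₃, h₂₃⟩ := Finset.two_lt_card.mp hR
  obtain ⟨x, hx⟩ : E.Nonempty := by
    by_contra hE
    rw [Set.not_nonempty_iff_eq_empty.mp hE, convexHull_empty] at hS
    exact hS (Or.inl hr₁)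
  refine ⟨x, hx, Or.inr ⟨hEB hx, ?_⟩⟩
  by_contra! hB3
  obtain ⟨u, v, -, rfl⟩ := Finset.card_eq_two.mp (by omega : B.card = 2)
  have hline : (↑R : Set ℂ) ⊆ line[ℝ, u, v] := fun y hy => convexHull_subset_affineSpan _
    (Finset.coe_pair (a := u) (b := v) ▸ convexHull_mono hEB (hS (Or.inl hy)))
  exact hgp r₁ (Or.inl hr₁) r₂ (Or.inl hr₂) r₃ (Or.inl hr₃) h₁₂ h₁₃ h₂₃
    (collinear_triple_of_mem_affineSpan_pair (hline hr₁) (hline hr₂) (hline hr₃))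

theorem exists_isBalancedTrianglePair {R B : Finset ℂ} (hd : Disjoint R B)
    (hgp : GenPos (↑R ∪ ↑B : Set ℂ)) (hR : 2 ≤ R.card) (hB : 2 ≤ B.card) :
    ∃ p q a b, IsBalancedTrianglePair R B p q a b := by
  induction hn : R.card + B.card using Nat.strong_induction_on generalizing R B with
  | _ n ih =>
  by_cases h22 : R.card = 2 ∧ B.card = 2
  · exact exists_isBalancedTrianglePair_of_card_eq_two hd hgp h22.1 h22.2
  obtain ⟨x, hxE, hx⟩ : ∃ x ∈ (convexHull ℝ (↑R ∪ ↑B : Set ℂ)).extremePoints ℝ,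
      (x ∈ R ∧ 3 ≤ R.card) ∨ (x ∈ B ∧ 3 ≤ B.card) := by
    rcases (by omega : 3 ≤ R.card ∨ 3 ≤ B.card) with h3 | h3
    · exact exists_extremePoint_of_three_le_card hgp h3 hB
    · rw [Set.union_comm] at hgp ⊢
      obtain ⟨x, hxE, hx⟩ := exists_extremePoint_of_three_le_card hgp h3 hR
      exact ⟨x, hxE, hx.symm⟩
  rcases hx with ⟨hxR, hR3⟩ | ⟨hxB, hB3⟩
  · have hcard := Finset.card_erase_of_mem hxR
    obtain ⟨p, q, a, b, h⟩ := ih _ (by omega) (Finset.disjoint_of_subset_left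
      (R.erase_subset x) hd) (hgp.mono (by push_cast; grind)) (by omega) hB rfl
    refine ⟨p, q, a, b, h.of_subset_insert (R.erase_subset x) subset_rfl (by simp)
      (Set.subset_insert _ _) (notMem_convexHull_of_mem_extremePoints hxE (by push_cast; grind)
        ?_)⟩
    simp [Finset.disjoint_left.mp hd hxR]
  · have hcard := Finset.card_erase_of_mem hxB
    obtain ⟨p, q, a, b, h⟩ := ih _ (by omega) (Finset.disjoint_of_subset_right
      (B.erase_subset x) hd) (hgp.mono (by push_cast; grind)) hR (by omega) rfl
    refine ⟨p, q, a, b, h.of_subset_insert subset_rfl (B.erase_subset x) (Set.subset_insert _ _)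
      (by simp) (notMem_convexHull_of_mem_extremePoints hxE (by push_cast; grind) ?_)⟩
    simp [Finset.disjoint_right.mp hd hxB]

/-- Every finite bicolored point set `S = R ∪ B` in general
position with `|R| ≥ 2` and `|B| ≥ 2` contains at least one balanced 4-hole. -/
theorem stmt0 (R B : Finset ℂ) (hdisj : Disjoint R B)
    (hgp : GenPos (↑R ∪ ↑B : Set ℂ)) (hR : 2 ≤ R.card) (hB : 2 ≤ B.card) :
    ∃ a b c d : ℂ, IsBalanced4Hole R B a b c d := by
  obtain ⟨p, q, a, b, h⟩ := exists_isBalancedTrianglePair hdisj hgp hR hB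
  exact ⟨a, p, b, q, h.isBalanced4Hole hgp⟩
end
end

section
/- Let S = R ∪ B be a finite bicolored point set in general position in the plane. If there exist two red points a, b ∈ R and two blue points c, d ∈ B such that the segments ab and cd intersect, then S contains a balanced convex 4-hole. -/
noncomputable section

/-! Among all crossing configurations (a red segment `a b` crossing a blue segment `c d`), take
one whose quadrilateral `conv {a, b, c, d}` has the fewest points of `S` in its interior. If a
point `x` lies inside, say `x` red, then `x` and one of `a`, `b`, call it `w`, lie on opposite
sides of the line `c d`, and inside the quadrilateral the segment `x w` must cross `c d`. The new
quadrilateral `conv {x, w, c, d}` lies in the old one and has `x` as a vertex, so it contains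
fewer points. Hence the minimal quadrilateral is empty; a crossing quadrilateral is convex and has
two red and two blue vertices, so it is a balanced convex 4-hole. -/

open Set ComplexConjugate

lemma zero_mem_uIcc_iff {α : Type*} [Ring α] [LinearOrder α] [IsStrictOrderedRing α] {a b : α} :
    (0 : α) ∈ uIcc a b ↔ a * b ≤ 0 := by
  rw [mem_uIcc, mul_nonpos_iff]
  tauto

lemma notMem_interior_of_image_subset_uIcc {X : Type*} [TopologicalSpace X] {f : X → ℝ}
    (hf : IsOpenMap f) {K : Set X} {v : X} {y : ℝ} (hK : f '' K ⊆ uIcc (f v) y) :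
    v ∉ interior K := by
  intro hv
  have := interior_mono hK (hf.image_interior_subset K (mem_image_of_mem f hv))
  rw [uIcc, interior_Icc, mem_Ioo, min_lt_iff, lt_max_iff] at this
  obtain ⟨h1 | h1, h2 | h2⟩ := this <;> linarith

namespace AffineMap

variable {E : Type*} [AddCommGroup E] [Module ℝ E]

lemma mapsTo_convexHull {F : Type*} [AddCommGroup F] [Module ℝ F] (f : E →ᵃ[ℝ] F) {s : Set E}
    {t : Set F} (ht : Convex ℝ t) (h : MapsTo f s t) : MapsTo f (convexHull ℝ s) t :=
  convexHull_min h (ht.affine_preimage f)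

lemma exists_mem_segment_eq_zero (f : E →ᵃ[ℝ] ℝ) {x w : E} (h : f x * f w ≤ 0) :
    ∃ q ∈ segment ℝ x w, f q = 0 := by
  rw [← mem_image, image_segment, segment_eq_uIcc]
  exact zero_mem_uIcc_iff.2 h

lemma mem_segment_of_mem_affineSpan_pair (f : E →ᵃ[ℝ] ℝ) {c d q : E} (hf : f c ≠ f d)
    (hq : q ∈ line[ℝ, c, d]) (hfq : f q ∈ uIcc (f c) (f d)) : q ∈ segment ℝ c d := by
  obtain ⟨r, rfl⟩ := mem_affineSpan_pair_iff_exists_lineMap_eq.1 hq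
  rw [apply_lineMap, ← segment_eq_uIcc, segment_eq_image_lineMap] at hfq
  obtain ⟨r', hr', hrr'⟩ := hfq
  rw [segment_eq_image_lineMap]
  exact ⟨r, lineMap_injective ℝ hf hrr' ▸ hr', rfl⟩

lemma notMem_convexHull_of_mapsTo_uIcc (f : E →ᵃ[ℝ] ℝ) {s : Set E} {v : E} {y : ℝ}
    (hs : MapsTo f s (uIcc 0 y)) (hv : f v * y < 0) : v ∉ convexHull ℝ s := by
  intro h
  rcases mem_uIcc.1 (f.mapsTo_convexHull (convex_uIcc 0 y) hs h) with ⟨h1, h2⟩ | ⟨h1, h2⟩ <;>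
    nlinarith

end AffineMap

/-- The cross product `(d - c) × (z - c)`: its sign tells on which side of the line `c d` the
point `z` lies. -/
def side (c d : ℂ) : ℂ →ᵃ[ℝ] ℝ where
  toFun z := ((z - c) * conj (d - c)).im
  linear := Complex.imLm ∘ₗ LinearMap.mulRight ℝ (conj (d - c))
  map_vadd' z v := by simp [add_sub_assoc, add_mul]

lemma side_apply (c d z : ℂ) : side c d z = ((z - c) * conj (d - c)).im := rfl

lemma side_left (c d : ℂ) : side c d c = 0 := by simp [side_apply]

lemma side_right (c d : ℂ) : side c d d = 0 := by simp [side_apply]; ring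

lemma side_eq_zero_of_mem_affineSpan_pair {c d z : ℂ} (hz : z ∈ line[ℝ, c, d]) :
    side c d z = 0 := by
  obtain ⟨r, rfl⟩ := mem_affineSpan_pair_iff_exists_lineMap_eq.1 hz
  simp only [AffineMap.apply_lineMap, side_left, side_right, AffineMap.lineMap_same_apply]

lemma mem_affineSpan_pair_of_side_eq_zero {c d z : ℂ} (hcd : c ≠ d) (hz : side c d z = 0) :
    z ∈ line[ℝ, c, d] := by
  have hdc : d - c ≠ 0 := sub_ne_zero.2 hcd.symm
  refine mem_affineSpan_pair_iff_exists_lineMap_eq.2 ⟨((z - c) / (d - c)).re, ?_⟩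
  have hreal : (((z - c) / (d - c)).re : ℂ) = (z - c) / (d - c) := by
    refine Complex.ext rfl ?_
    simp only [side_apply, Complex.mul_im, Complex.conj_re, Complex.conj_im] at hz
    rw [Complex.ofReal_im, Complex.div_im, ← sub_div, eq_comm, div_eq_zero_iff]
    left
    linarith
  rw [AffineMap.lineMap_apply_module', Complex.real_smul, hreal, div_mul_cancel₀ _ hdc,
    sub_add_cancel]

lemma isOpenMap_side {c d : ℂ} (hcd : c ≠ d) : IsOpenMap (side c d) :=
  Complex.isOpenMap_im.comp <|
    (Homeomorph.mulRight₀ _ ((map_ne_zero _).2 (sub_ne_zero.2 hcd.symm))).isOpenMap.comp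
      (isOpenMap_sub_right c)

lemma notMem_convexHull_of_side_mul_side_neg {c d v w : ℂ} (h : side c d v * side c d w < 0) :
    v ∉ convexHull ℝ {w, c, d} :=
  (side c d).notMem_convexHull_of_mapsTo_uIcc (by simp [MapsTo, side_left, side_right]) h

def pointsInside (S : Set ℂ) (a b c d : ℂ) : Set ℂ :=
  S ∩ interior (convexHull ℝ {a, b, c, d})

lemma pointsInside_comm (S : Set ℂ) (a b c d : ℂ) :
    pointsInside S c d a b = pointsInside S a b c d := by
  rw [pointsInside, pointsInside, show ({c, d, a, b} : Set ℂ) = {a, b, c, d} by ext; simp; tauto]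

namespace GenPos

variable {S : Set ℂ} (hS : GenPos S) {a b c d x : ℂ}
include hS

lemma notMem_segment (hc : c ∈ S) (hd : d ∈ S) (hx : x ∈ S) (hxc : x ≠ c) (hxd : x ≠ d) :
    x ∉ segment ℝ c d := by
  intro h
  rcases eq_or_ne c d with rfl | hcd
  · rw [segment_same, mem_singleton_iff] at h
    exact hxc h
  · exact hS c hc x hx d hd hxc.symm hcd hxd (mem_segment_iff_wbtw.1 h).collinear

lemma side_ne_zero (hc : c ∈ S) (hd : d ∈ S) (hx : x ∈ S) (hcd : c ≠ d) (hxc : x ≠ c)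
    (hxd : x ≠ d) : side c d x ≠ 0 := fun h =>
  hS x hx c hc d hd hxc hxd hcd
    (collinear_insert_of_mem_affineSpan_pair (mem_affineSpan_pair_of_side_eq_zero hcd h))

lemma ne_of_crossing (ha : a ∈ S) (hb : b ∈ S) (hc : c ∈ S) (hd : d ∈ S) (hac : a ≠ c)
    (had : a ≠ d) (hbc : b ≠ c) (hcross : (segment ℝ a b ∩ segment ℝ c d).Nonempty) :
    a ≠ b ∧ c ≠ d := by
  obtain ⟨p, hpab, hpcd⟩ := hcross
  constructor
  · rintro rfl
    rw [segment_same, mem_singleton_iff] at hpab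
    exact hS.notMem_segment hc hd ha hac had (hpab ▸ hpcd)
  · rintro rfl
    rw [segment_same, mem_singleton_iff] at hpcd
    exact hS.notMem_segment ha hb hc hac.symm hbc.symm (hpcd ▸ hpab)

variable (ha : a ∈ S) (hb : b ∈ S) (hc : c ∈ S) (hd : d ∈ S)
  (hac : a ≠ c) (had : a ≠ d) (hbc : b ≠ c) (hbd : b ≠ d)
  (hcross : (segment ℝ a b ∩ segment ℝ c d).Nonempty)
include ha hb hc hd hac had hbc hbd hcross

lemma side_mul_side_neg_of_crossing : side c d a * side c d b < 0 := by
  obtain ⟨-, hcd⟩ := hS.ne_of_crossing ha hb hc hd hac had hbc hcross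
  obtain ⟨p, hpab, hpcd⟩ := hcross
  have hp : side c d p ∈ uIcc (side c d a) (side c d b) := by
    rw [← segment_eq_uIcc, ← image_segment]
    exact mem_image_of_mem _ hpab
  rw [side_eq_zero_of_mem_affineSpan_pair (mem_segment_iff_wbtw.1 hpcd).mem_affineSpan,
    zero_mem_uIcc_iff] at hp
  exact hp.lt_of_ne (mul_ne_zero (hS.side_ne_zero hc hd ha hcd hac had)
    (hS.side_ne_zero hc hd hb hcd hbc hbd))

lemma side_mul_side_neg_of_crossing' : side a b c * side a b d < 0 :=
  hS.side_mul_side_neg_of_crossing hc hd ha hb hac.symm hbc.symm had.symm hbd.symm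
    (by rwa [inter_comm])

lemma convexPos_of_crossing : ConvexPos ({a, b, c, d} : Set ℂ) := by
  have hAB := hS.side_mul_side_neg_of_crossing ha hb hc hd hac had hbc hbd hcross
  have hCD := hS.side_mul_side_neg_of_crossing' ha hb hc hd hac had hbc hbd hcross
  have hBA : side c d b * side c d a < 0 := by rwa [mul_comm]
  have hDC : side a b d * side a b c < 0 := by rwa [mul_comm]
  rintro v (rfl | rfl | rfl | rfl) hv
  · exact notMem_convexHull_of_side_mul_side_neg hAB (convexHull_mono (fun z => by simp; tauto) hv)
  · exact notMem_convexHull_of_side_mul_side_neg hBA (convexHull_mono (fun z => by simp; tauto) hv)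
  · exact notMem_convexHull_of_side_mul_side_neg hCD (convexHull_mono (fun z => by simp; tauto) hv)
  · exact notMem_convexHull_of_side_mul_side_neg hDC (convexHull_mono (fun z => by simp; tauto) hv)

lemma exists_crossing_of_mem_pointsInside (hxK : x ∈ pointsInside S a b c d) (hxc : x ≠ c)
    (hxd : x ≠ d) :
    ∃ w ∈ ({a, b} : Set ℂ), (segment ℝ x w ∩ segment ℝ c d).Nonempty ∧
      pointsInside S x w c d ⊂ pointsInside S a b c d := by
  obtain ⟨-, hcd⟩ := hS.ne_of_crossing ha hb hc hd hac had hbc hcross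
  have hAB := hS.side_mul_side_neg_of_crossing ha hb hc hd hac had hbc hbd hcross
  have hCD := hS.side_mul_side_neg_of_crossing' ha hb hc hd hac had hbc hbd hcross
  obtain ⟨hx, hxK⟩ := hxK
  have hX := hS.side_ne_zero hc hd hx hcd hxc hxd
  obtain ⟨w, hw, hXW⟩ : ∃ w ∈ ({a, b} : Set ℂ), side c d x * side c d w < 0 := by
    by_cases hXA : side c d x * side c d a < 0
    · exact ⟨a, by simp, hXA⟩
    · refine ⟨b, by simp, ?_⟩
      by_contra! hXB
      nlinarith [mul_nonneg (not_lt.1 hXA) hXB,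
        mul_neg_of_pos_of_neg (by positivity : 0 < side c d x ^ 2) hAB]
  have hxK' : x ∈ convexHull ℝ {a, b, c, d} := interior_subset hxK
  have hwK : w ∈ convexHull ℝ {a, b, c, d} :=
    subset_convexHull ℝ _ (by rcases hw with rfl | rfl <;> simp)
  have hsub : convexHull ℝ {x, w, c, d} ⊆ convexHull ℝ {a, b, c, d} :=
    convexHull_min (insert_subset hxK' <| insert_subset hwK <|
      (pair_subset (by simp) (by simp)).trans (subset_convexHull ℝ _)) (convex_convexHull ℝ _)
  obtain ⟨q, hq, hq0⟩ := (side c d).exists_mem_segment_eq_zero hXW.le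
  -- On the old quadrilateral `side a b` stays between its values at `c` and `d`, so the point
  -- `q` of the line `c d` lies between `c` and `d`.
  have hqcd : q ∈ segment ℝ c d := by
    refine (side a b).mem_segment_of_mem_affineSpan_pair (fun h => ?_)
      (mem_affineSpan_pair_of_side_eq_zero hcd hq0)
      ((side a b).mapsTo_convexHull (convex_uIcc _ _) ?_
        ((convex_convexHull ℝ _).segment_subset hxK' hwK hq))
    · exact (mul_self_nonneg _).not_gt (h ▸ hCD)
    · simp [MapsTo, side_left, side_right, zero_mem_uIcc_iff.2 hCD.le]
  have hx_notMem : x ∉ interior (convexHull ℝ {x, w, c, d}) := by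
    refine notMem_interior_of_image_subset_uIcc (y := side c d w) (isOpenMap_side hcd)
      ((side c d).mapsTo_convexHull (convex_uIcc _ _) ?_).image_subset
    simp [MapsTo, side_left, side_right, zero_mem_uIcc_iff.2 hXW.le]
  exact ⟨w, hw, ⟨q, hq, hqcd⟩, inter_subset_inter_right _ (interior_mono hsub),
    fun h => hx_notMem (h ⟨hx, hxK⟩).2⟩

end GenPos

section Bicolored

variable {R B : Finset ℂ} (hdisj : Disjoint R B) (hS : GenPos (↑R ∪ ↑B : Set ℂ)) {a b c d : ℂ}
  (ha : a ∈ R) (hb : b ∈ R) (hc : c ∈ B) (hd : d ∈ B)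
  (hcross : (segment ℝ a b ∩ segment ℝ c d).Nonempty)
include hdisj hS ha hb hc hd hcross

lemma isBalancedConvex4Hole_of_crossing (hempty : pointsInside (↑R ∪ ↑B) a b c d = ∅) :
    IsBalancedConvex4Hole R B a b c d := by
  have hcR : c ∉ R := Finset.disjoint_right.1 hdisj hc
  have hdR : d ∉ R := Finset.disjoint_right.1 hdisj hd
  have haB : a ∉ B := Finset.disjoint_left.1 hdisj ha
  have hbB : b ∉ B := Finset.disjoint_left.1 hdisj hb
  have hac := ne_of_mem_of_not_mem ha hcR
  have had := ne_of_mem_of_not_mem ha hdR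
  have hbc := ne_of_mem_of_not_mem hb hcR
  have hbd := ne_of_mem_of_not_mem hb hdR
  obtain ⟨hab, hcd⟩ := hS.ne_of_crossing (Or.inl ha) (Or.inl hb) (Or.inr hc) (Or.inr hd)
    hac had hbc hcross
  have hR : ({a, b, c, d} : Set ℂ) ∩ ↑R = {a, b} := by
    rw [insert_inter_of_mem ha, insert_inter_of_mem hb, insert_inter_of_notMem hcR,
      singleton_inter_eq_empty.2 hdR, insert_empty_eq]
  have hB : ({a, b, c, d} : Set ℂ) ∩ ↑B = {c, d} := by
    rw [insert_inter_of_notMem haB, insert_inter_of_notMem hbB, insert_inter_of_mem hc,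
      singleton_inter_of_mem hd]
  refine ⟨by simp [hab, hac, had, hbc, hbd, hcd], hS.convexPos_of_crossing (Or.inl ha) (Or.inl hb)
    (Or.inr hc) (Or.inr hd) hac had hbc hbd hcross, ?_, by rw [hR, ncard_pair hab],
    by rw [hB, ncard_pair hcd], fun x hx hxK => hempty.subset ⟨hx, hxK⟩⟩
  simp [insert_subset_iff, ha, hb, hc, hd]

lemma exists_crossing_pointsInside_ssubset (hne : (pointsInside (↑R ∪ ↑B) a b c d).Nonempty) :
    ∃ a' ∈ R, ∃ b' ∈ R, ∃ c' ∈ B, ∃ d' ∈ B, (segment ℝ a' b' ∩ segment ℝ c' d').Nonempty ∧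
      pointsInside (↑R ∪ ↑B) a' b' c' d' ⊂ pointsInside (↑R ∪ ↑B) a b c d := by
  have hRB : ∀ {p q}, p ∈ R → q ∈ B → p ≠ q := fun hp hq =>
    ne_of_mem_of_not_mem hp (Finset.disjoint_right.1 hdisj hq)
  obtain ⟨x, hx⟩ := hne
  rcases hx.1 with hxR | hxB
  · obtain ⟨w, hw, hxw, hlt⟩ := hS.exists_crossing_of_mem_pointsInside (Or.inl ha) (Or.inl hb)
      (Or.inr hc) (Or.inr hd) (hRB ha hc) (hRB ha hd) (hRB hb hc) (hRB hb hd) hcross hx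
      (hRB hxR hc) (hRB hxR hd)
    exact ⟨x, hxR, w, by rcases hw with rfl | rfl <;> assumption, c, hc, d, hd, hxw, hlt⟩
  · rw [← pointsInside_comm] at hx
    obtain ⟨w, hw, hxw, hlt⟩ := hS.exists_crossing_of_mem_pointsInside (Or.inr hc) (Or.inr hd)
      (Or.inl ha) (Or.inl hb) (hRB ha hc).symm (hRB hb hc).symm (hRB ha hd).symm
      (hRB hb hd).symm (by rwa [inter_comm]) hx (hRB ha hxB).symm (hRB hb hxB).symm
    rw [pointsInside_comm _ a b x w, pointsInside_comm _ a b c d] at hlt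
    exact ⟨a, ha, b, hb, x, hxB, w, by rcases hw with rfl | rfl <;> assumption,
      by rwa [inter_comm], hlt⟩

end Bicolored

/-- If a segment joining two red points and a segment joining two
blue points intersect, then `S = R ∪ B` contains a balanced convex 4-hole. -/
theorem stmt7 (R B : Finset ℂ) (hdisj : Disjoint R B)
    (hgp : GenPos (↑R ∪ ↑B : Set ℂ)) (a b c d : ℂ)
    (ha : a ∈ R) (hb : b ∈ R) (hc : c ∈ B) (hd : d ∈ B)
    (hcross : (segment ℝ a b ∩ segment ℝ c d).Nonempty) :
    ∃ p q s t : ℂ, IsBalancedConvex4Hole R B p q s t := by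
  induction hn : (pointsInside (↑R ∪ ↑B) a b c d).ncard using Nat.strong_induction_on
    generalizing a b c d with
  | _ n ih =>
    rcases (pointsInside (↑R ∪ ↑B) a b c d).eq_empty_or_nonempty with hempty | hne
    · exact ⟨a, b, c, d, isBalancedConvex4Hole_of_crossing hdisj hgp ha hb hc hd hcross hempty⟩
    · obtain ⟨a', ha', b', hb', c', hc', d', hd', hcross', hsub⟩ :=
        exists_crossing_pointsInside_ssubset hdisj hgp ha hb hc hd hcross hne
      have hfin : (pointsInside (↑R ∪ ↑B) a b c d).Finite := (toFinite _).subset inter_subset_left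
      exact ih _ (hn ▸ ncard_lt_ncard hsub hfin) a' b' c' d' ha' hb' hc' hd' hcross' rfl
end
end

section
/- Let S = R ∪ B be a finite bicolored point set in general position in the plane such that R and B are linearly separable. If there exist a point r ∈ R, a point b ∈ B, an edge e of the convex hull of R, and an edge e' of the convex hull of B such that the relative interiors of e and e' both intersect the relative interior of the segment rb, then condition C1 or condition C2 holds. -/
noncomputable section

/-!
Let `p` and `q` be the points where `r b` crosses `u v` and `w z`, let `g` and `h` be the
functionals supporting `CH(R)` along `u v` and `CH(B)` along `w z`, and let `f` separate `R` from
`B`. Since `f` increases along `r b`, the order on that segment is `r, p, q, b`; general position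
puts `b` strictly beyond the line `u v` and `r` strictly beyond `w z`. Hence `q` lies in the open
triangle `u v b`, which contains no red point, and `r ∈ W(b, u, v)`: a blue point in that triangle
gives C2, and symmetrically a red point in the triangle `w z r ∋ p` does.

Otherwise the line `u v` passes through the interior point `p` of the triangle `w z r`, while `u`
and `v` stay outside that triangle. If
`w` or `z` were not strictly beyond that line, the line would meet `[w, z]` inside the triangle,
hence inside `[u, v]`, which `f` keeps apart from `[w, z]`. So `w, z` lie strictly beyond `u v` and
`u, v` strictly beyond `w z`, and the quadrilateral `u v w z` is a convex hole whose interior lies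
in `{g > g u} ∩ {h > h w}`, away from both hulls: C1.
-/

open Set Module

section

variable {V : Type*} [AddCommGroup V] [Module ℝ V] [TopologicalSpace V] [IsTopologicalAddGroup V]
  [ContinuousSMul ℝ V] {g : V →ₗ[ℝ] ℝ} {s : Set V} {a : ℝ} {x : V}

theorem lt_apply_of_mem_interior_convexHull (hg : g ≠ 0) (hs : ∀ y ∈ s, a ≤ g y)
    (hx : x ∈ interior (convexHull ℝ s)) : a < g x := by
  have hhull : convexHull ℝ s ⊆ g ⁻¹' Ici a :=
    convexHull_min hs ((convex_Ici a).linear_preimage g)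
  have hgx := (g.isOpenMap_of_finiteDimensional (LinearMap.surjective hg)).image_interior_subset _
    (mem_image_of_mem g hx)
  have := interior_mono ((image_mono hhull).trans (image_preimage_subset _ _)) hgx
  rwa [interior_Ici] at this

theorem apply_lt_of_mem_interior_convexHull (hg : g ≠ 0) (hs : ∀ y ∈ s, g y ≤ a)
    (hx : x ∈ interior (convexHull ℝ s)) : g x < a :=
  neg_lt_neg_iff.1 <| lt_apply_of_mem_interior_convexHull (g := -g) (neg_ne_zero.2 hg)
    (fun y hy => neg_le_neg (hs y hy)) hx

end

theorem collinear_of_apply_eq {V : Type*} [AddCommGroup V] [Module ℝ V]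
    (hV : finrank ℝ V = 2) {g : V →ₗ[ℝ] ℝ} (hg : g ≠ 0) {u v y : V}
    (hu : g u = g y) (hv : g v = g y) : Collinear ℝ ({u, v, y} : Set V) := by
  have : FiniteDimensional ℝ V := .of_finrank_eq_succ hV
  have hker : finrank ℝ (LinearMap.ker g) = 1 := by
    have := Module.Dual.finrank_ker_add_one_of_ne_zero hg
    omega
  rw [collinear_iff_finrank_le_one, ← hker]
  refine Submodule.finrank_mono ?_
  rw [vectorSpan_def, Submodule.span_le]
  rintro _ ⟨x₁, hx₁, x₂, hx₂, rfl⟩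
  have hconst : ∀ x ∈ ({u, v, y} : Set V), g x = g y := by
    rintro x (rfl | rfl | rfl) <;> simp [*]
  simp [hconst x₁ hx₁, hconst x₂ hx₂]

theorem mem_segment_of_mem_affineSpan_pair {V : Type*} [AddCommGroup V] [Module ℝ V]
    [TopologicalSpace V] [IsTopologicalAddGroup V] [ContinuousConstSMul ℝ V]
    {K : Set V} (hK : Convex ℝ K) {u v p y : V}
    (hp : p ∈ openSegment ℝ u v) (hpK : p ∈ interior K)
    (hu : u ∉ interior K) (hv : v ∉ interior K)
    (hy : y ∈ line[ℝ, u, v]) (hyK : y ∈ K) : y ∈ segment ℝ u v := by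
  rw [openSegment_eq_image_lineMap] at hp
  obtain ⟨θ, ⟨hθ₀, hθ₁⟩, rfl⟩ := hp
  obtain ⟨t, rfl⟩ := mem_affineSpan_pair_iff_exists_lineMap_eq.1 hy
  have hseg : ∀ σ ∈ openSegment ℝ θ t, AffineMap.lineMap u v σ ∈ interior K := fun σ hσ =>
    hK.openSegment_interior_self_subset_interior hpK hyK
      (image_openSegment ℝ (AffineMap.lineMap u v) θ t ▸ mem_image_of_mem _ hσ)
  refine lineMap_mem_segment ℝ _ _ ⟨?_, ?_⟩
  · by_contra! ht
    have h0 : (0 : ℝ) ∈ openSegment ℝ θ t := by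
      rw [openSegment_symm, openSegment_eq_Ioo (ht.trans hθ₀)]
      exact ⟨ht, hθ₀⟩
    exact hu (by simpa using hseg 0 h0)
  · by_contra! ht
    have h1 : (1 : ℝ) ∈ openSegment ℝ θ t := by
      rw [openSegment_eq_Ioo (hθ₁.trans ht)]
      exact ⟨hθ₁, ht⟩
    exact hv (by simpa using hseg 1 h1)

theorem lt_apply_of_openSegment_meets_interior {V : Type*} [AddCommGroup V] [Module ℝ V]
    [TopologicalSpace V] [IsTopologicalAddGroup V] [ContinuousSMul ℝ V] (hV : finrank ℝ V = 2)
    {g : V →ₗ[ℝ] ℝ} (hg : g ≠ 0) {a : ℝ} {u v w z r p : V}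
    (hu : g u = a) (hv : g v = a) (hr : g r < a) (hp : p ∈ openSegment ℝ u v)
    (hpT : p ∈ interior (convexHull ℝ {w, z, r}))
    (huT : u ∉ interior (convexHull ℝ {w, z, r})) (hvT : v ∉ interior (convexHull ℝ {w, z, r}))
    (hdisj : Disjoint (segment ℝ u v) (segment ℝ w z)) : a < g w ∧ a < g z := by
  have hgp : g p = a := (convex_hyperplane g.isLinear a).openSegment_subset hu hv hp
  by_contra hcon
  have ha : a ∈ segment ℝ (g w) (g z) := by
    have : ¬ (g w ≤ a ∧ g z ≤ a) := fun ⟨hw, hz⟩ =>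
      (apply_lt_of_mem_interior_convexHull hg (by rintro _ (rfl | rfl | rfl) <;> linarith) hpT).ne
        hgp
    rw [segment_eq_uIcc, mem_uIcc]
    grind
  obtain ⟨y, hy, hgy⟩ : a ∈ g '' segment ℝ w z := image_segment ℝ g.toAffineMap w z ▸ ha
  have huv : u ≠ v := by
    rintro rfl
    rw [openSegment_same, mem_singleton_iff] at hp
    exact huT (hp ▸ hpT)
  have hyl : y ∈ line[ℝ, u, v] :=
    (collinear_of_apply_eq hV hg (hu.trans hgy.symm) (hv.trans hgy.symm))
      |>.mem_affineSpan_of_mem_of_ne (by simp) (by simp) (by simp) huv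
  have hyT : y ∈ convexHull ℝ {w, z, r} :=
    segment_subset_convexHull (by simp) (by simp) hy
  exact disjoint_left.1 hdisj
    (mem_segment_of_mem_affineSpan_pair (convex_convexHull ℝ _) hp hpT huT hvT hyl hyT) hy

theorem mem_interior_convexHull_of_mem_openSegment {V : Type*} [NormedAddCommGroup V]
    [NormedSpace ℝ V] (hV : finrank ℝ V = 2) {a b c p q : V}
    (habc : ¬ Collinear ℝ ({a, b, c} : Set V)) (hp : p ∈ openSegment ℝ a b)
    (hq : q ∈ openSegment ℝ p c) : q ∈ interior (convexHull ℝ {a, b, c}) := by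
  have : FiniteDimensional ℝ V := .of_finrank_eq_succ hV
  have hind : AffineIndependent ℝ ![a, b, c] := affineIndependent_iff_not_collinear_set.2 habc
  obtain ⟨T, hT⟩ : ∃ T : AffineBasis (Fin 3) ℝ V, ⇑T = ![a, b, c] :=
    ⟨⟨_, hind, by rw [hind.affineSpan_eq_top_iff_card_eq_finrank_add_one]; simp [hV]⟩, rfl⟩
  have hrange : range T = {a, b, c} := by
    rw [hT, Matrix.range_cons, Matrix.range_cons_cons_empty, singleton_union]
  obtain ⟨α, β, hα, hβ, hαβ, rfl⟩ := hp
  obtain ⟨μ, γ, hμ, hγ, hμγ, rfl⟩ := hq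
  have hw : ∑ i, ![μ * α, μ * β, γ] i = 1 := by
    simp only [Fin.sum_univ_three, Matrix.cons_val]
    linear_combination μ * hαβ + hμγ
  have hcomb : μ • (α • a + β • b) + γ • c =
      Finset.univ.affineCombination ℝ T ![μ * α, μ * β, γ] := by
    rw [Finset.univ.affineCombination_eq_linear_combination _ _ hw]
    simp [Fin.sum_univ_three, hT, smul_smul]
  rw [← hrange, T.interior_convexHull]
  intro i
  rw [hcomb, T.coord_apply_combination_of_mem (Finset.mem_univ i) hw]
  fin_cases i <;> simp [hα, hβ, hμ, hγ]

theorem mem_openSegment_of_apply_lt {V : Type*} [AddCommGroup V] [Module ℝ V]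
    {f : V →ₗ[ℝ] ℝ} {x y p q : V} (hp : p ∈ openSegment ℝ x y) (hq : q ∈ openSegment ℝ x y)
    (hxy : f x < f y) (hpq : f p < f q) : p ∈ openSegment ℝ x q ∧ q ∈ openSegment ℝ p y := by
  rw [openSegment_eq_image_lineMap] at hp hq
  obtain ⟨s, ⟨hs₀, hs₁⟩, rfl⟩ := hp
  obtain ⟨t, ⟨ht₀, ht₁⟩, rfl⟩ := hq
  have hst : s < t := by
    simp only [AffineMap.lineMap_apply_module, map_add, map_smul, smul_eq_mul] at hpq
    nlinarith
  constructor
  · have := image_openSegment ℝ (AffineMap.lineMap x y) 0 t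
    rw [AffineMap.lineMap_apply_zero] at this
    exact this ▸ mem_image_of_mem _ (by rw [openSegment_eq_Ioo ht₀]; exact ⟨hs₀, hst⟩)
  · have := image_openSegment ℝ (AffineMap.lineMap x y) s 1
    rw [AffineMap.lineMap_apply_one] at this
    exact this ▸ mem_image_of_mem _ (by rw [openSegment_eq_Ioo hs₁]; exact ⟨hst, ht₁⟩)

theorem lt_apply_and_apply_lt_of_mem_openSegment {V : Type*} [AddCommGroup V] [Module ℝ V]
    (hV : finrank ℝ V = 2) {g : V →ₗ[ℝ] ℝ} (hg : g ≠ 0) {a : ℝ} {u v r b p : V}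
    (hu : g u = a) (hv : g v = a) (hr : g r ≤ a) (huvb : ¬ Collinear ℝ ({u, v, b} : Set V))
    (hp : p ∈ openSegment ℝ u v) (hpr : p ∈ openSegment ℝ r b) : a < g b ∧ g r < a := by
  have hgp : g p = a := (convex_hyperplane g.isLinear a).openSegment_subset hu hv hp
  have hgb : g b ≠ a := fun h =>
    huvb (collinear_of_apply_eq hV hg (hu.trans h.symm) (hv.trans h.symm))
  obtain ⟨α, β, hα, hβ, hαβ, rfl⟩ := hpr
  obtain rfl : α = 1 - β := by linarith
  simp only [map_add, map_smul, smul_eq_mul] at hgp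
  have hab : a < g b := by
    refine hgb.lt_or_gt.resolve_left fun h => ?_
    nlinarith
  exact ⟨hab, by nlinarith⟩

theorem mem_wedge_of_mem_openSegment {u v b r p : ℂ} (hp : p ∈ openSegment ℝ u v)
    (hpr : p ∈ openSegment ℝ b r) : r ∈ wedge b u v := by
  obtain ⟨α, β, hα, hβ, hαβ, rfl⟩ := hp
  obtain ⟨μ, ν, hμ, hν, hμν, hpr⟩ := hpr
  -- `ν • (r - b) = p - b = α • (u - b) + β • (v - b)`
  refine ⟨α / ν, β / ν, by positivity, by positivity, ?_⟩
  have hν' : (ν : ℂ) ≠ 0 := by exact_mod_cast hν.ne'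
  simp only [Complex.real_smul, Complex.ofReal_div] at hpr ⊢
  field_simp
  have hαβ' : (α : ℂ) + β = 1 := by exact_mod_cast hαβ
  have hμν' : (μ : ℂ) + ν = 1 := by exact_mod_cast hμν
  linear_combination hpr + b * hαβ' - b * hμν'

theorem eq_of_mem_convexHull_insert {V : Type*} [AddCommGroup V] [Module ℝ V]
    {g : V →ₗ[ℝ] ℝ} {a : ℝ} {s : Set V} {x y : V} (hs : ∀ z ∈ s, a < g z)
    (hy : g y = a) (hx : g x = a) (hxs : x ∈ convexHull ℝ (insert y s)) : x = y := by
  rcases s.eq_empty_or_nonempty with rfl | hne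
  · simpa using hxs
  rw [convexHull_insert hne, mem_convexJoin] at hxs
  obtain ⟨_, rfl, z, hz, α, β, hα, hβ, hαβ, rfl⟩ := hxs
  have hgz : a < g z := convexHull_min hs (convex_halfSpace_gt g.isLinear a) hz
  obtain rfl : α = 1 - β := by linarith
  simp only [map_add, map_smul, smul_eq_mul, hy] at hx
  obtain rfl : β = 0 := by nlinarith
  simp

theorem convexPos_of_lt_apply {g h : ℂ →ₗ[ℝ] ℝ} {u v w z : ℂ} (huv : u ≠ v) (hwz : w ≠ z)
    (hgv : g v = g u) (hgw : g u < g w) (hgz : g u < g z)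
    (hhz : h z = h w) (hhu : h w < h u) (hhv : h w < h v) : ConvexPos {u, v, w, z} := by
  have hgwz : ∀ x ∈ ({w, z} : Set ℂ), g u < g x := by simp [hgw, hgz]
  have hhuv : ∀ x ∈ ({u, v} : Set ℂ), h w < h x := by simp [hhu, hhv]
  obtain ⟨hsu, hsv, hsw, hsz⟩ : ({u, v, w, z} : Set ℂ) \ {u} ⊆ insert v {w, z} ∧
      ({u, v, w, z} : Set ℂ) \ {v} ⊆ insert u {w, z} ∧
      ({u, v, w, z} : Set ℂ) \ {w} ⊆ insert z {u, v} ∧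
      ({u, v, w, z} : Set ℂ) \ {z} ⊆ insert w {u, v} := by
    refine ⟨?_, ?_, ?_, ?_⟩ <;> intro <;>
      simp only [mem_sdiff, mem_insert_iff, mem_singleton_iff] <;> tauto
  rintro x (rfl | rfl | rfl | rfl) hx
  · exact huv (eq_of_mem_convexHull_insert hgwz hgv rfl (convexHull_mono hsu hx))
  · exact huv (eq_of_mem_convexHull_insert hgwz rfl hgv (convexHull_mono hsv hx)).symm
  · exact hwz (eq_of_mem_convexHull_insert hhuv hhz rfl (convexHull_mono hsw hx))
  · exact hwz (eq_of_mem_convexHull_insert hhuv rfl hhz (convexHull_mono hsz hx)).symm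

theorem seeEachOther_of_lt_apply {R B : Finset ℂ} (hRB : Disjoint R B) {u v w z : ℂ}
    (he : IsHullEdge R u v) (he' : IsHullEdge B w z) {g h : ℂ →ₗ[ℝ] ℝ} (hg : g ≠ 0)
    (hh : h ≠ 0) (hgR : ∀ x ∈ R, g x ≤ g u) (hgv : g v = g u) (hgw : g u < g w)
    (hgz : g u < g z) (hhB : ∀ x ∈ B, h x ≤ h w) (hhz : h z = h w) (hhu : h w < h u)
    (hhv : h w < h v) : SeeEachOther R B u v w z := by
  have ⟨hu, hv, huv, _⟩ := he
  have ⟨hw, hz, hwz, _⟩ := he'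
  have hnotR : ∀ x ∈ B, x ∉ R := fun x hx => Finset.disjoint_right.1 hRB hx
  have hne : ∀ x ∈ R, ∀ y ∈ B, x ≠ y := fun x hx y hy => ne_of_mem_of_not_mem hx (hnotR y hy)
  have hint : ∀ x ∈ interior (convexHull ℝ {u, v, w, z}), g u < g x ∧ h w < h x :=
    fun x hx => ⟨lt_apply_of_mem_interior_convexHull hg
      (by simp [hgv, hgw.le, hgz.le]) hx,
      lt_apply_of_mem_interior_convexHull hh (by simp [hhz, hhu.le, hhv.le]) hx⟩
  have hRhull : ∀ x ∈ convexHull ℝ (R : Set ℂ), g x ≤ g u :=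
    convexHull_min hgR (convex_halfSpace_le g.isLinear _)
  have hBhull : ∀ x ∈ convexHull ℝ (B : Set ℂ), h x ≤ h w :=
    convexHull_min hhB (convex_halfSpace_le h.isLinear _)
  refine ⟨he, he', ⟨?_, convexPos_of_lt_apply huv hwz hgv hgw hgz hhz hhu hhv, ?_, ?_, ?_, ?_⟩,
    ?_, ?_⟩
  · simp [huv, hwz, hne u hu w hw, hne u hu z hz, hne v hv w hw, hne v hv z hz]
  · simp [insert_subset_iff, hu, hv, hw, hz]
  · have hQR : ({u, v, w, z} : Set ℂ) ∩ R = {u, v} := by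
      ext x
      simp only [mem_inter_iff, mem_insert_iff, mem_singleton_iff, Finset.mem_coe]
      grind
    rw [hQR, ncard_pair huv]
  · have hQB : ({u, v, w, z} : Set ℂ) ∩ B = {w, z} := by
      ext x
      simp only [mem_inter_iff, mem_insert_iff, mem_singleton_iff, Finset.mem_coe]
      grind
    rw [hQB, ncard_pair hwz]
  · rintro x (hx | hx) hxQ
    · exact (hgR x hx).not_gt (hint x hxQ).1
    · exact (hhB x hx).not_gt (hint x hxQ).2
  · exact eq_empty_iff_forall_notMem.2 fun x ⟨hxQ, hxR⟩ => (hRhull x hxR).not_gt (hint x hxQ).1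
  · exact eq_empty_iff_forall_notMem.2 fun x ⟨hxQ, hxB⟩ => (hBhull x hxB).not_gt (hint x hxQ).2

/-- `CondC2 R B` unfolds to `CondC2Side R B ∨ CondC2Side B R`. -/
def CondC2Side (P Q : Finset ℂ) : Prop :=
  ∃ u v : ℂ, IsHullEdge (↑P : Set ℂ) u v ∧ ∃ b ∈ Q, ∃ z ∈ Q,
    z ∈ openTriangle u v b ∧ (∀ x ∈ P, x ∉ openTriangle u v b) ∧ ∃ x ∈ P, x ∈ wedge b u v

theorem condC2Side_of_mem_openTriangle {P Q : Finset ℂ} {u v b r p y : ℂ}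
    (he : IsHullEdge P u v) {g : ℂ →ₗ[ℝ] ℝ} (hg : g ≠ 0) (hgP : ∀ x ∈ P, g x ≤ g u)
    (hgv : g v = g u) (hb : b ∈ Q) (hgb : g u < g b) (hr : r ∈ P)
    (hp : p ∈ openSegment ℝ u v) (hpr : p ∈ openSegment ℝ b r) (hy : y ∈ Q)
    (hyT : y ∈ openTriangle u v b) : CondC2Side P Q :=
  ⟨u, v, he, b, hb, y, hy, hyT, fun x hx hxT => (hgP x hx).not_gt
    (lt_apply_of_mem_interior_convexHull hg (by simp [hgv, hgb.le]) hxT),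
    r, hr, mem_wedge_of_mem_openSegment hp hpr⟩

theorem GenPos.not_collinear_of_disjoint {R B : Finset ℂ} (hgp : GenPos (↑R ∪ ↑B : Set ℂ))
    (hRB : Disjoint R B) {u v b : ℂ} (hu : u ∈ R) (hv : v ∈ R) (huv : u ≠ v) (hb : b ∈ B) :
    ¬ Collinear ℝ ({u, v, b} : Set ℂ) := by
  have hbR : b ∉ R := Finset.disjoint_right.1 hRB hb
  exact hgp u (.inl hu) v (.inl hv) b (.inr hb) huv (ne_of_mem_of_not_mem hu hbR)
    (ne_of_mem_of_not_mem hv hbR)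

/-- if `R` and `B` are linearly separable and the relative
interiors of an edge `e` of `CH(R)` and an edge `e'` of `CH(B)` both meet the
relative interior of a segment `r b` with `r ∈ R`, `b ∈ B`, then condition C1
or condition C2 holds. -/
theorem stmt12 (R B : Finset ℂ) (hdisj : Disjoint R B)
    (hgp : GenPos (↑R ∪ ↑B : Set ℂ)) (hsep : LinSep R B)
    (r b u v w z : ℂ) (hr : r ∈ R) (hb : b ∈ B)
    (he : IsHullEdge (↑R : Set ℂ) u v) (he' : IsHullEdge (↑B : Set ℂ) w z)
    (h1 : (openSegment ℝ u v ∩ openSegment ℝ r b).Nonempty)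
    (h2 : (openSegment ℝ w z ∩ openSegment ℝ r b).Nonempty) :
    CondC1 R B ∨ CondC2 R B := by
  have ⟨hu, hv, huv, g, hg, hguv, hgR⟩ := he
  have ⟨hw, hz, hwz, h, hh, hhwz, hhB⟩ := he'
  obtain ⟨f, c, hfR, hfB⟩ := hsep
  obtain ⟨p, hp, hpr⟩ := h1
  obtain ⟨q, hq, hqr⟩ := h2
  have hV := Complex.finrank_real_complex
  have huvb := hgp.not_collinear_of_disjoint hdisj hu hv huv hb
  have hwzr := (union_comm (B : Set ℂ) R ▸ hgp).not_collinear_of_disjoint hdisj.symm hw hz hwz hr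
  have hsegR : ∀ x ∈ segment ℝ u v, f x < c := fun x hx =>
    (convex_halfSpace_lt f.isLinear c).segment_subset (hfR u hu) (hfR v hv) hx
  have hsegB : ∀ x ∈ segment ℝ w z, c < f x := fun x hx =>
    (convex_halfSpace_gt f.isLinear c).segment_subset (hfB w hw) (hfB z hz) hx
  obtain ⟨hprq, hqpb⟩ := mem_openSegment_of_apply_lt hpr hqr ((hfR r hr).trans (hfB b hb))
    ((hsegR p (openSegment_subset_segment _ _ _ hp)).trans
      (hsegB q (openSegment_subset_segment _ _ _ hq)))
  obtain ⟨hgb, hgr⟩ := lt_apply_and_apply_lt_of_mem_openSegment hV hg rfl hguv.symm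
    (hgR r hr) huvb hp hpr
  obtain ⟨hhr, hhb⟩ := lt_apply_and_apply_lt_of_mem_openSegment hV hh rfl hhwz.symm
    (hhB b hb) hwzr hq (openSegment_symm ℝ r b ▸ hqr)
  by_cases hB' : ∃ y ∈ B, y ∈ openTriangle u v b
  · obtain ⟨y, hy, hyT⟩ := hB'
    exact .inr (.inl (condC2Side_of_mem_openTriangle he hg hgR hguv.symm hb hgb hr hp
      (openSegment_symm ℝ r b ▸ hpr) hy hyT))
  by_cases hR' : ∃ y ∈ R, y ∈ openTriangle w z r
  · obtain ⟨y, hy, hyT⟩ := hR'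
    exact .inr (.inr (condC2Side_of_mem_openTriangle he' hh hhB hhwz.symm hr hhr hb hq hqr
      hy hyT))
  push Not at hB' hR'
  have hdisj_seg : Disjoint (segment ℝ u v) (segment ℝ w z) :=
    disjoint_left.2 fun x hxR hxB => lt_asymm (hsegR x hxR) (hsegB x hxB)
  obtain ⟨hgw, hgz⟩ := lt_apply_of_openSegment_meets_interior hV hg rfl hguv.symm hgr hp
    (mem_interior_convexHull_of_mem_openSegment hV hwzr hq (openSegment_symm ℝ r q ▸ hprq))
    (hR' u hu) (hR' v hv) hdisj_seg
  obtain ⟨hhu, hhv⟩ := lt_apply_of_openSegment_meets_interior hV hh rfl hhwz.symm hhb hq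
    (mem_interior_convexHull_of_mem_openSegment hV huvb hp hqpb)
    (hB' w hw) (hB' z hz) hdisj_seg.symm
  exact .inl ⟨u, v, w, z, seeEachOther_of_lt_apply hdisj he he' hg hh hgR hguv.symm hgw hgz
    hhB hhwz.symm hhu hhv⟩
end
end
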